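/- Define α_n = (-1)^n q^{(n^2-3n)/4} (1-q^{2n+1})/(1-q) and β_n = (-1)^n q^{n^2/2 - n} (q^{1/2};q)_n / (q;q)_{2n} (interpreted with q^{1/2} a fixed square root of q). Then for every n≥0, β_n = Σ_{r=0}^n α_r / ((q;q)_{n-r} (q^2;q)_{n+r}). -/

import Mathlib

open scoped BigOperators

/-- Finite q-Pochhammer symbol `(x;q)_n = ∏_{k=0}^{n-1} (1 - x qᵏ)`. -/
noncomputable def poch (x q : ℂ) (n : ℕ) : ℂ := ∏ k ∈ Finset.range n, (1 - x * q ^ k)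

/-- Infinite q-Pochhammer symbol `(x;q)_∞ = ∏_{k≥0} (1 - x qᵏ)`. -/
noncomputable def pochInf (x q : ℂ) : ℂ := ∏' k : ℕ, (1 - x * q ^ k)

/-!
Put `q = s²` and `G_N(z) = ∑ₘ (-1)ᵐ s^C(m,2) zᵐ [N, m]_q`. Multiplied by `(q;q)_{2n+1}`, the `r`-th
term of the Bailey sum is `(-1)ʳ q^((r²-3r)/4) (1 - q^(2r+1)) [2n+1, n-r]_q`, whose two halves are
the terms of index `n - r` and `n + 1 + r` of `G_{2n+1}(s^(2-n))`, up to a common factor.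

The two Pascal rules give `G_{N+1}(z) = G_N(qz) - z G_N(sz)` and
`G_{N+1}(sz) = G_N(sz) - s^(2N+1) z G_N(z)`, and reversing the order of summation gives
`G_N(z) = (-1)^N s^C(N,2) z^N G_N(w)` whenever `z w s^(N-1) = 1`. At `z = s^(-k)` this reflection
forces `G_{2k+1}(z) = 0` and `G_{2k}(sz) = s^k G_{2k}(z)`, after which the recurrences give
`G_{2k}(s^(-k)) = s^C(k,2) (s;q)_k` by induction on `k`, and then
`G_{2n+1}(s^(2-n)) = (1 - q^(2n+1)) s^C(n,2) (s;q)_n`.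
-/

open Finset

lemma poch_zero (x q : ℂ) : poch x q 0 = 1 := prod_range_zero _

lemma poch_succ (x q : ℂ) (n : ℕ) : poch x q (n + 1) = poch x q n * (1 - x * q ^ n) :=
  prod_range_succ _ n

lemma poch_self_succ (q : ℂ) (n : ℕ) : poch q q (n + 1) = poch q q n * (1 - q ^ (n + 1)) := by
  rw [poch_succ, ← pow_succ']

lemma poch_self_succ' (q : ℂ) (n : ℕ) : poch q q (n + 1) = (1 - q) * poch (q ^ 2) q n := by
  rw [poch, prod_range_succ', poch, mul_comm]
  congr 1
  · simp
  · exact prod_congr rfl fun k _ => by ring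

lemma poch_self_ne_zero {q : ℂ} (hq : ∀ k : ℕ, q ^ (k + 1) ≠ 1) (n : ℕ) : poch q q n ≠ 0 :=
  prod_ne_zero_iff.2 fun k _ => sub_ne_zero.2 fun h => hq k (by rw [pow_succ']; exact h.symm)

noncomputable def qBinom (q : ℂ) (N m : ℕ) : ℂ :=
  if m ≤ N then poch q q N / (poch q q m * poch q q (N - m)) else 0

section qBinom

variable {q : ℂ}

lemma qBinom_of_le {N m : ℕ} (h : m ≤ N) :
    qBinom q N m = poch q q N / (poch q q m * poch q q (N - m)) := if_pos h

lemma qBinom_of_lt {N m : ℕ} (h : N < m) : qBinom q N m = 0 := if_neg (Nat.not_le.2 h)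

lemma qBinom_zero_right (hq : ∀ k : ℕ, q ^ (k + 1) ≠ 1) (N : ℕ) : qBinom q N 0 = 1 := by
  rw [qBinom_of_le N.zero_le, poch_zero, one_mul, Nat.sub_zero, div_self (poch_self_ne_zero hq N)]

lemma qBinom_self (hq : ∀ k : ℕ, q ^ (k + 1) ≠ 1) (N : ℕ) : qBinom q N N = 1 := by
  rw [qBinom_of_le le_rfl, Nat.sub_self, poch_zero, mul_one, div_self (poch_self_ne_zero hq N)]

lemma qBinom_symm {N m : ℕ} (h : m ≤ N) : qBinom q N (N - m) = qBinom q N m := by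
  rw [qBinom_of_le (N.sub_le m), qBinom_of_le h, Nat.sub_sub_self h, mul_comm]

lemma qBinom_succ_succ (hq : ∀ k : ℕ, q ^ (k + 1) ≠ 1) (N m : ℕ) :
    qBinom q (N + 1) (m + 1) = qBinom q N m + q ^ (m + 1) * qBinom q N (m + 1) := by
  rcases lt_trichotomy m N with hlt | rfl | hgt
  · obtain ⟨d, rfl⟩ := Nat.exists_eq_add_of_lt hlt
    rw [qBinom_of_le (by omega), qBinom_of_le (by omega), qBinom_of_le (by omega),
      show m + d + 1 + 1 - (m + 1) = d + 1 by omega, show m + d + 1 - m = d + 1 by omega,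
      show m + d + 1 - (m + 1) = d by omega, poch_self_succ q (m + d + 1), poch_self_succ q m,
      poch_self_succ q d]
    have hP := poch_self_ne_zero hq
    have h1 := sub_ne_zero.2 (hq m).symm
    have h2 := sub_ne_zero.2 (hq d).symm
    field_simp
    ring
  · rw [qBinom_self hq, qBinom_self hq, qBinom_of_lt m.lt_succ_self]
    ring
  · rw [qBinom_of_lt (by omega), qBinom_of_lt hgt, qBinom_of_lt (by omega)]
    ring

lemma qBinom_succ_succ' (hq : ∀ k : ℕ, q ^ (k + 1) ≠ 1) (N m : ℕ) :
    qBinom q (N + 1) (m + 1) = q ^ (N - m) * qBinom q N m + qBinom q N (m + 1) := by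
  rcases lt_trichotomy m N with hlt | rfl | hgt
  · obtain ⟨d, rfl⟩ := Nat.exists_eq_add_of_lt hlt
    rw [qBinom_of_le (by omega), qBinom_of_le (by omega), qBinom_of_le (by omega),
      show m + d + 1 + 1 - (m + 1) = d + 1 by omega, show m + d + 1 - m = d + 1 by omega,
      show m + d + 1 - (m + 1) = d by omega, poch_self_succ q (m + d + 1), poch_self_succ q m,
      poch_self_succ q d]
    have hP := poch_self_ne_zero hq
    have h1 := sub_ne_zero.2 (hq m).symm
    have h2 := sub_ne_zero.2 (hq d).symm
    field_simp
    ring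
  · rw [qBinom_self hq, qBinom_self hq, qBinom_of_lt m.lt_succ_self, Nat.sub_self]
    ring
  · rw [qBinom_of_lt (by omega), qBinom_of_lt hgt, qBinom_of_lt (by omega)]
    ring

lemma sum_mul_qBinom_succ (hq : ∀ k : ℕ, q ^ (k + 1) ≠ 1) (a : ℕ → ℂ) (N : ℕ) :
    ∑ m ∈ range (N + 1 + 1), a m * qBinom q (N + 1) m =
      ∑ m ∈ range (N + 1), (a m * q ^ m + a (m + 1)) * qBinom q N m := by
  have hshift : ∑ m ∈ range (N + 1), a m * q ^ m * qBinom q N m =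
      ∑ m ∈ range (N + 1), a (m + 1) * (q ^ (m + 1) * qBinom q N (m + 1)) +
        a 0 * qBinom q (N + 1) 0 := by
    rw [sum_range_succ', sum_range_succ, qBinom_of_lt N.lt_succ_self, qBinom_zero_right hq,
      qBinom_zero_right hq]
    simp only [mul_assoc, mul_zero, add_zero, pow_zero, one_mul]
  simp only [add_mul, sum_add_distrib, hshift]
  rw [sum_range_succ' _ (N + 1)]
  simp only [qBinom_succ_succ hq, mul_add, sum_add_distrib]
  ring

lemma sum_mul_qBinom_succ' (hq : ∀ k : ℕ, q ^ (k + 1) ≠ 1) (a : ℕ → ℂ) (N : ℕ) :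
    ∑ m ∈ range (N + 1 + 1), a m * qBinom q (N + 1) m =
      ∑ m ∈ range (N + 1), (a m + a (m + 1) * q ^ (N - m)) * qBinom q N m := by
  have hshift : ∑ m ∈ range (N + 1), a m * qBinom q N m =
      ∑ m ∈ range (N + 1), a (m + 1) * qBinom q N (m + 1) + a 0 * qBinom q (N + 1) 0 := by
    rw [sum_range_succ', sum_range_succ, qBinom_of_lt N.lt_succ_self, qBinom_zero_right hq,
      qBinom_zero_right hq, mul_zero, add_zero]
  simp only [add_mul, mul_assoc, sum_add_distrib, hshift]
  rw [sum_range_succ' _ (N + 1)]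
  simp only [qBinom_succ_succ' hq, mul_add, sum_add_distrib]
  ring

end qBinom

/-- `∑ₘ (-1)ᵐ q^(C(m,2)/2) zᵐ [N, m]_q` for `q = s²`. -/
noncomputable def sqrtBinomialSum (s z : ℂ) (N : ℕ) : ℂ :=
  ∑ m ∈ range (N + 1), (-1) ^ m * s ^ m.choose 2 * z ^ m * qBinom (s ^ 2) N m

section sqrtBinomialSum

variable {s : ℂ}

lemma sqrtBinomialSum_succ (hs : ∀ k : ℕ, (s ^ 2) ^ (k + 1) ≠ 1) (z : ℂ) (N : ℕ) :
    sqrtBinomialSum s z (N + 1) =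
      sqrtBinomialSum s (s ^ 2 * z) N - z * sqrtBinomialSum s (s * z) N := by
  rw [sqrtBinomialSum, sum_mul_qBinom_succ hs, sqrtBinomialSum, sqrtBinomialSum, mul_sum,
    ← sum_sub_distrib]
  refine sum_congr rfl fun m _ => ?_
  rw [Nat.choose_succ_succ', Nat.choose_one_right]
  ring

lemma sqrtBinomialSum_succ' (hs : ∀ k : ℕ, (s ^ 2) ^ (k + 1) ≠ 1) (z : ℂ) (N : ℕ) :
    sqrtBinomialSum s (s * z) (N + 1) =
      sqrtBinomialSum s (s * z) N - s ^ (2 * N + 1) * z * sqrtBinomialSum s z N := by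
  rw [sqrtBinomialSum, sum_mul_qBinom_succ' hs, sqrtBinomialSum, sqrtBinomialSum, mul_sum,
    ← sum_sub_distrib]
  refine sum_congr rfl fun m hm => ?_
  obtain ⟨d, rfl⟩ := Nat.exists_eq_add_of_le (Nat.lt_succ_iff.1 (mem_range.1 hm))
  rw [Nat.choose_succ_succ', Nat.choose_one_right, Nat.add_sub_cancel_left]
  ring

lemma sqrtBinomialSum_reflect (hs0 : s ≠ 0) {z w : ℂ} {N : ℕ}
    (hzw : z * w * s ^ N = s) :
    sqrtBinomialSum s z N = (-1) ^ N * s ^ N.choose 2 * z ^ N * sqrtBinomialSum s w N := by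
  rw [sqrtBinomialSum, ← sum_range_reflect, sqrtBinomialSum, mul_sum]
  refine sum_congr rfl fun j hj => ?_
  obtain ⟨k, rfl⟩ := Nat.exists_eq_add_of_le (Nat.lt_succ_iff.1 (mem_range.1 hj))
  rw [Nat.add_sub_cancel, Nat.add_sub_cancel_left, ← qBinom_symm (Nat.le_add_right j k),
    Nat.add_sub_cancel_left]
  have hexp : (j + k).choose 2 + j.choose 2 + j = k.choose 2 + (j + k) * j := by
    qify
    simp only [Nat.cast_choose_two]
    push_cast
    ring
  have hpow : s ^ k.choose 2 = s ^ (j + k).choose 2 * s ^ j.choose 2 * (z * w) ^ j := by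
    refine mul_right_cancel₀ (pow_ne_zero ((j + k) * j) hs0) ?_
    calc s ^ k.choose 2 * s ^ ((j + k) * j)
        = s ^ (j + k).choose 2 * s ^ j.choose 2 * (z * w * s ^ (j + k)) ^ j := by
          rw [hzw, ← pow_add, ← pow_add, ← pow_add, hexp]
      _ = _ := by ring
  rw [hpow, show (-1 : ℂ) ^ k = (-1) ^ (j + k) * (-1) ^ j by
    rw [← pow_add, add_comm j k, add_assoc, ← two_mul, pow_add, pow_mul]; norm_num]
  ring

lemma sqrtBinomialSum_two_mul_add_one_eq_zero (hs0 : s ≠ 0) {z : ℂ} {k : ℕ}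
    (hz : z * s ^ k = 1) : sqrtBinomialSum s z (2 * k + 1) = 0 := by
  have hcoeff : s ^ (2 * k + 1).choose 2 * z ^ (2 * k + 1) = 1 := by
    have hexp : (2 * k + 1).choose 2 = k * (2 * k + 1) := by
      qify
      simp only [Nat.cast_choose_two]
      push_cast
      ring
    rw [hexp, pow_mul, ← mul_pow, mul_comm, hz, one_pow]
  have h := sqrtBinomialSum_reflect hs0 (w := z) (N := 2 * k + 1)
    (by linear_combination (z * s ^ k + 1) * s * hz)
  rw [pow_succ, pow_mul, neg_one_sq, one_pow, one_mul] at h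
  linear_combination h / 2 - sqrtBinomialSum s z (2 * k + 1) / 2 * hcoeff

lemma sqrtBinomialSum_mul_left_two_mul (hs0 : s ≠ 0) {z : ℂ} {k : ℕ} (hz : z * s ^ k = 1) :
    sqrtBinomialSum s (s * z) (2 * k) = s ^ k * sqrtBinomialSum s z (2 * k) := by
  have hcoeff : s ^ (2 * k).choose 2 * (s * z) ^ (2 * k) = s ^ k := by
    have hexp : (2 * k).choose 2 + 2 * k = k + k * (2 * k) := by
      qify
      simp only [Nat.cast_choose_two]
      push_cast
      ring
    rw [mul_pow, ← mul_assoc, ← pow_add, hexp, pow_add, pow_mul, mul_assoc, ← mul_pow,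
      mul_comm (s ^ k) z, hz, one_pow, mul_one]
  rw [sqrtBinomialSum_reflect hs0 (w := z) (N := 2 * k)
    (by linear_combination (z * s ^ k + 1) * s * hz), pow_mul, neg_one_sq, one_pow, one_mul,
    hcoeff]

lemma sqrtBinomialSum_two_mul (hs0 : s ≠ 0) (hs : ∀ k : ℕ, (s ^ 2) ^ (k + 1) ≠ 1) {z : ℂ}
    {k : ℕ} (hz : z * s ^ k = 1) :
    sqrtBinomialSum s z (2 * k) = s ^ k.choose 2 * poch s (s ^ 2) k := by
  induction k generalizing z with
  | zero => simp [sqrtBinomialSum, qBinom_zero_right hs, poch_zero]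
  | succ k ih =>
    have hy : s * z * s ^ k = 1 := by linear_combination hz
    rw [show 2 * (k + 1) = 2 * k + 1 + 1 by ring, sqrtBinomialSum_succ hs,
      sqrtBinomialSum_two_mul_add_one_eq_zero hs0 hy, show s ^ 2 * z = s * (s * z) by ring,
      sqrtBinomialSum_succ' hs, sqrtBinomialSum_mul_left_two_mul hs0 hy, ih hy,
      Nat.choose_succ_succ', Nat.choose_one_right, poch_succ]
    linear_combination (-s ^ (3 * k + 1) * (s ^ k.choose 2 * poch s (s ^ 2) k)) * hy

lemma sqrtBinomialSum_two_mul_add_one_sq_mul (hs0 : s ≠ 0) (hs : ∀ k : ℕ, (s ^ 2) ^ (k + 1) ≠ 1)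
    {z : ℂ} {n : ℕ} (hz : z * s ^ n = 1) :
    sqrtBinomialSum s (s ^ 2 * z) (2 * n + 1) =
      (1 - s ^ (4 * n + 2)) * (s ^ n.choose 2 * poch s (s ^ 2) n) := by
  have hodd := sqrtBinomialSum_succ hs z (2 * n)
  rw [sqrtBinomialSum_two_mul_add_one_eq_zero hs0 hz] at hodd
  rw [show s ^ 2 * z = s * (s * z) by ring, sqrtBinomialSum_succ' hs,
    show s * (s * z) = s ^ 2 * z by ring]
  rw [sqrtBinomialSum_mul_left_two_mul hs0 hz, sqrtBinomialSum_two_mul hs0 hs hz] at hodd ⊢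
  linear_combination -hodd +
    (1 - s ^ (4 * n + 2)) * (s ^ n.choose 2 * poch s (s ^ 2) n) * hz

end sqrtBinomialSum

lemma pow_succ_ne_one_of_norm_lt_one {q : ℂ} (hq : ‖q‖ < 1) (k : ℕ) : q ^ (k + 1) ≠ 1 :=
  fun h => (pow_lt_one₀ (norm_nonneg q) hq k.succ_ne_zero).ne (by rw [← norm_pow, h, norm_one])

lemma sum_range_two_mul_add_two {M : Type*} [AddCommMonoid M] (f : ℕ → M) (n : ℕ) :
    ∑ m ∈ range (2 * n + 1 + 1), f m = ∑ r ∈ range (n + 1), (f (n - r) + f (n + 1 + r)) := by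
  rw [sum_add_distrib, show 2 * n + 1 + 1 = (n + 1) + (n + 1) by ring, sum_range_add]
  congr 1
  simpa using (sum_range_reflect f (n + 1)).symm

lemma sq_sub_three_mul_div_two (r : ℕ) : ((r : ℤ) ^ 2 - 3 * r) / 2 = r.choose 2 - r := by
  refine Int.ediv_eq_of_eq_mul_left two_ne_zero ?_
  qify
  simp only [Nat.cast_choose_two]
  ring

section BaileyPair

variable {s : ℂ}

lemma neg_one_pow_mul_zpow_mul (hs0 : s ≠ 0) (n m : ℕ) (e t : ℤ) :
    (-1) ^ n * s ^ e * ((-1) ^ m * s ^ m.choose 2 * (s ^ t) ^ m) =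
      (-1) ^ (n + m) * s ^ (e + m.choose 2 + t * m) := by
  rw [← zpow_natCast s (m.choose 2), ← zpow_natCast (s ^ t) m, ← zpow_mul, pow_add,
    zpow_add₀ hs0, zpow_add₀ hs0]
  ring

lemma bailey_summand_eq (hs0 : s ≠ 0) (hs : ∀ k : ℕ, (s ^ 2) ^ (k + 1) ≠ 1) {n r : ℕ}
    (hr : r ≤ n) :
    ((-1 : ℂ) ^ r * s ^ (((r : ℤ) ^ 2 - 3 * (r : ℤ)) / 2) * (1 - (s ^ 2) ^ (2 * r + 1)) /
        (1 - s ^ 2)) / (poch (s ^ 2) (s ^ 2) (n - r) * poch ((s ^ 2) ^ 2) (s ^ 2) (n + r)) =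
      (-1) ^ n * s ^ ((n.choose 2 : ℤ) - n) *
        ((-1) ^ (n - r) * s ^ (n - r).choose 2 * (s ^ ((2 : ℤ) - n)) ^ (n - r) *
            qBinom (s ^ 2) (2 * n + 1) (n - r) +
          (-1) ^ (n + 1 + r) * s ^ (n + 1 + r).choose 2 * (s ^ ((2 : ℤ) - n)) ^ (n + 1 + r) *
            qBinom (s ^ 2) (2 * n + 1) (n + 1 + r)) / poch (s ^ 2) (s ^ 2) (2 * n + 1) := by
  obtain ⟨d, rfl⟩ := Nat.exists_eq_add_of_le hr
  rw [Nat.add_sub_cancel_left]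
  have hlow : (-1) ^ (r + d) * s ^ (((r + d).choose 2 : ℤ) - (r + d : ℕ)) *
      ((-1) ^ d * s ^ d.choose 2 * (s ^ ((2 : ℤ) - (r + d : ℕ))) ^ d) =
        (-1) ^ r * s ^ (((r : ℤ) ^ 2 - 3 * (r : ℤ)) / 2) := by
    rw [neg_one_pow_mul_zpow_mul hs0, add_assoc, ← two_mul, pow_add, pow_mul, neg_one_sq,
      one_pow, mul_one, sq_sub_three_mul_div_two]
    congr 2
    qify
    simp only [Nat.cast_choose_two]
    push_cast
    ring
  have hhigh : (-1) ^ (r + d) * s ^ (((r + d).choose 2 : ℤ) - (r + d : ℕ)) *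
      ((-1) ^ (r + d + 1 + r) * s ^ (r + d + 1 + r).choose 2 *
        (s ^ ((2 : ℤ) - (r + d : ℕ))) ^ (r + d + 1 + r)) =
        -((-1) ^ r * s ^ (((r : ℤ) ^ 2 - 3 * (r : ℤ)) / 2) * (s ^ 2) ^ (2 * r + 1)) := by
    rw [neg_one_pow_mul_zpow_mul hs0, sq_sub_three_mul_div_two, ← pow_mul,
      ← zpow_natCast s (2 * (2 * r + 1)), mul_assoc _ (s ^ _), ← zpow_add₀ hs0,
      show r + d + (r + d + 1 + r) = 2 * (r + d) + r + 1 by ring, pow_succ, pow_add, pow_mul,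
      neg_one_sq, one_pow, one_mul, mul_neg_one, neg_mul]
    congr 3
    qify
    simp only [Nat.cast_choose_two]
    push_cast
    ring
  have hsymm : qBinom (s ^ 2) (2 * (r + d) + 1) (r + d + 1 + r) =
      qBinom (s ^ 2) (2 * (r + d) + 1) d := by
    rw [← qBinom_symm (show d ≤ 2 * (r + d) + 1 by omega)]
    congr 1
    omega
  rw [hsymm, ← add_mul, ← mul_assoc, mul_add, hlow, hhigh, qBinom_of_le (by omega),
    show 2 * (r + d) + 1 - d = r + d + r + 1 by omega, poch_self_succ' (s ^ 2) (r + d + r)]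
  have h₁ := poch_self_ne_zero hs (2 * (r + d) + 1)
  have h₂ := poch_self_ne_zero hs d
  have h₃ := poch_self_ne_zero hs (r + d + r + 1)
  rw [poch_self_succ'] at h₃
  field_simp
  ring

end BaileyPair

/-- A Bailey pair relative to `q` involving half-integer powers of `q`:
`s` is a fixed square root of `q`, so that `q^{1/2} = s`, `q^{n²/2-n} = s^{n²-2n}`
and `q^{(r²-3r)/4} = s^{(r²-3r)/2}`. -/
theorem slater_bailey_pair_half (q s : ℂ) (hq : ‖q‖ < 1)
    (hs : s ^ 2 = q) (hs0 : s ≠ 0) (n : ℕ) :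
    (-1 : ℂ) ^ n * s ^ ((n : ℤ) ^ 2 - 2 * (n : ℤ)) * poch s q n / poch q q (2 * n) =
      ∑ r ∈ Finset.range (n + 1),
        ((-1 : ℂ) ^ r * s ^ (((r : ℤ) ^ 2 - 3 * (r : ℤ)) / 2) *
            (1 - q ^ (2 * r + 1)) / (1 - q)) /
          (poch q q (n - r) * poch (q ^ 2) q (n + r)) := by
  subst hs
  have hs := pow_succ_ne_one_of_norm_lt_one hq
  have hz : s ^ (-(n : ℤ)) * s ^ n = 1 := by
    rw [zpow_neg, zpow_natCast, inv_mul_cancel₀ (pow_ne_zero n hs0)]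
  have hsum := sqrtBinomialSum_two_mul_add_one_sq_mul hs0 hs hz
  rw [show s ^ 2 * s ^ (-(n : ℤ)) = s ^ ((2 : ℤ) - n) by
      rw [sub_eq_add_neg, zpow_add₀ hs0, zpow_two, sq],
    sqrtBinomialSum, sum_range_two_mul_add_two] at hsum
  rw [sum_congr rfl fun r hr => bailey_summand_eq hs0 hs (mem_range_succ_iff.1 hr), ← sum_div,
    ← mul_sum, hsum, poch_self_succ]
  have hpow : s ^ ((n.choose 2 : ℤ) - n) * s ^ n.choose 2 = s ^ ((n : ℤ) ^ 2 - 2 * n) := by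
    rw [← zpow_natCast s (n.choose 2), ← zpow_add₀ hs0]
    congr 1
    qify
    simp only [Nat.cast_choose_two]
    ring
  have h2n := poch_self_ne_zero hs (2 * n)
  have h := sub_ne_zero.2 (hs (2 * n)).symm
  field_simp
  rw [← hpow, ← pow_mul]
  ring
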